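/- arXiv:0906.3380 — 3 statements merged into one kernel-verified Lean document; each statement's English description precedes it below -/
import Mathlib

section
/- Let n be a positive integer with φ(rad(n)) | n, and let w be a positive integer coprime to n with φ(w·rad(n)) | n. Then n = φ(w·rad(n)·n/φ(w·rad(n))). -/
/-!
Put `m = w · rad n` and `q = n / φ m`. Every prime factor of `q` divides `n`, hence `rad n`, hence
`m`; and multiplying `m` by a number all of whose primes already divide `m` multiplies `φ m` by
that number. So `φ (m · q) = φ m · q = n`.
-/

/-- The radical of `n`: the product of the distinct prime factors of `n`. -/
def rad (n : ℕ) : ℕ := ∏ p ∈ n.primeFactors, p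

open scoped Nat

/- In Euler's product formula `φ k · ∏ p = k · ∏ (p - 1)` both products are unchanged when `k = m`
is replaced by `m * q`. -/
theorem Nat.totient_mul_of_primeFactors_subset {m q : ℕ} (h : q.primeFactors ⊆ m.primeFactors) :
    φ (m * q) = φ m * q := by
  rcases eq_or_ne q 0 with rfl | hq
  · simp
  rcases eq_or_ne m 0 with rfl | hm
  · simp
  have hpf : (m * q).primeFactors = m.primeFactors := by
    rw [Nat.primeFactors_mul hm hq, Finset.union_eq_left.2 h]
  have hprod : 0 < ∏ p ∈ m.primeFactors, p :=
    Finset.prod_pos fun p hp => Nat.pos_of_mem_primeFactors hp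
  apply Nat.eq_of_mul_eq_mul_right hprod
  have euler := Nat.totient_mul_prod_primeFactors (m * q)
  rw [hpf] at euler
  rw [euler, mul_right_comm (φ m), Nat.totient_mul_prod_primeFactors]
  ring

theorem primeFactors_rad (n : ℕ) : (rad n).primeFactors = n.primeFactors :=
  Nat.primeFactors_prod_primeFactors n

theorem totient_preimage_with_cofactor_general (n w : ℕ)
    (hdvd : Nat.totient (w * rad n) ∣ n) :
    n = Nat.totient (w * rad n * n / Nat.totient (w * rad n)) := by
  rcases eq_or_ne n 0 with rfl | hn
  · simp
  have hm : w * rad n ≠ 0 := fun h => hn (Nat.eq_zero_of_zero_dvd (by simpa [h] using hdvd))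
  have hcofactor : (n / φ (w * rad n)).primeFactors ⊆ (w * rad n).primeFactors :=
    calc (n / φ (w * rad n)).primeFactors
        _ ⊆ n.primeFactors := Nat.primeFactors_mono (Nat.div_dvd_of_dvd hdvd) hn
        _ = (rad n).primeFactors := (primeFactors_rad n).symm
        _ ⊆ (w * rad n).primeFactors := Nat.primeFactors_mono (dvd_mul_left _ _) hm
  rw [Nat.mul_div_assoc _ hdvd, Nat.totient_mul_of_primeFactors_subset hcofactor,
    Nat.mul_div_cancel' hdvd]

theorem totient_preimage_with_cofactor (n w : ℕ) (hn : 0 < n) (hw : 0 < w)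
    (hrad : Nat.totient (rad n) ∣ n)
    (hcop : Nat.Coprime w n)
    (hdvd : Nat.totient (w * rad n) ∣ n) :
    n = Nat.totient (w * rad n * n / Nat.totient (w * rad n)) :=
  totient_preimage_with_cofactor_general n w hdvd
end

section
/- Let n be a positive integer with φ(rad(n)) | n and let q be a prime not dividing n. If t is any prime occurring in a prime chain starting at q (i.e., there are primes q = t_0, t_1, ..., t_k = t with t_{j+1} ≡ 1 (mod t_j) for all j), then t does not divide n. -/
/-- `InPrimeChain q t` means there is a finite sequence of primes
`t_0 = q, t_1, ..., t_k = t` with `t_{j+1} ≡ 1 (mod t_j)` for each `j`. -/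
def InPrimeChain (q t : ℕ) : Prop :=
  ∃ (k : ℕ) (f : ℕ → ℕ), f 0 = q ∧ f k = t ∧ (∀ j ≤ k, (f j).Prime) ∧
    ∀ j < k, f (j + 1) ≡ 1 [MOD f j]

open Nat

/-! If `φ (rad n) ∣ n`, then divisibility of `n` propagates backwards along a prime chain:
a prime `t ∣ n` has `t - 1 = φ t ∣ φ (rad n) ∣ n`, so every `s` with `t ≡ 1 (mod s)` divides `n`. -/

lemma sub_one_dvd_totient_rad {n p : ℕ} (hp : p ∈ n.primeFactors) : p - 1 ∣ φ (rad n) :=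
  Nat.totient_prime (Nat.prime_of_mem_primeFactors hp) ▸
    Nat.totient_dvd_of_dvd (Finset.dvd_prod_of_mem _ hp)

lemma dvd_of_prime_dvd_of_modEq_one {n s t : ℕ} (hrad : φ (rad n) ∣ n) (ht : t.Prime)
    (htn : t ∣ n) (hts : t ≡ 1 [MOD s]) : s ∣ n := by
  obtain rfl | hn := eq_or_ne n 0
  · exact dvd_zero s
  have hst : s ∣ t - 1 := (Nat.modEq_iff_dvd' ht.one_le).mp hts.symm
  exact hst.trans <| (sub_one_dvd_totient_rad (Nat.mem_primeFactors.mpr ⟨ht, htn, hn⟩)).trans hrad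

lemma InPrimeChain.dvd_of_dvd {n q t : ℕ} (hrad : φ (rad n) ∣ n) (hchain : InPrimeChain q t)
    (htn : t ∣ n) : q ∣ n := by
  obtain ⟨k, f, rfl, rfl, hprime, hmod⟩ := hchain
  exact Nat.decreasingInduction (motive := fun j _ => f j ∣ n)
    (fun j hj hdvd => dvd_of_prime_dvd_of_modEq_one hrad (hprime (j + 1) hj) hdvd (hmod j hj))
    htn (Nat.zero_le k)

theorem prime_chain_not_dvd_general (n q t : ℕ)
    (hrad : Nat.totient (rad n) ∣ n) (hqn : ¬ q ∣ n)
    (hchain : InPrimeChain q t) : ¬ t ∣ n :=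
  fun htn => hqn (hchain.dvd_of_dvd hrad htn)

theorem prime_chain_not_dvd (n q t : ℕ) (hn : 0 < n)
    (hrad : Nat.totient (rad n) ∣ n) (hq : q.Prime) (hqn : ¬ q ∣ n)
    (hchain : InPrimeChain q t) : ¬ t ∣ n :=
  prime_chain_not_dvd_general n q t hrad hqn hchain
end

section
/- Let n be a positive integer with φ(rad(n)) | n. Suppose w_1 ≠ w_2 are positive integers coprime to n with φ(w_i·rad(n)) | n for i = 1, 2. Then the integers m_i = w_i·rad(n)·n/φ(w_i·rad(n)) satisfy φ(m_1) = φ(m_2) = n and m_1 ≠ m_2. -/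
/-!
If every prime factor of `d` divides `k`, Euler's product formula gives `φ (k * d) = φ k * d`.
Hence `m = k * (n / φ k)` satisfies `φ m = n` as soon as `φ k ∣ n` and every prime factor of `n`
divides `k`, e.g. for `k = w * rad n`. Since `w` is coprime to `n` while the cofactor
`rad n * (n / φ k)` divides `n * n`, the number `m` determines `w`.
-/

open Nat

lemma rad_dvd (n : ℕ) : rad n ∣ n := prod_primeFactors_dvd n

theorem Nat.totient_mul_of_primeFactors_subset_s19 {k d : ℕ} (h : d.primeFactors ⊆ k.primeFactors) :
    φ (k * d) = φ k * d := by
  rcases eq_or_ne k 0 with rfl | hk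
  · simp
  rcases eq_or_ne d 0 with rfl | hd
  · simp
  have hkd : (k * d).primeFactors = k.primeFactors := by
    rw [primeFactors_mul hk hd, Finset.union_eq_left.2 h]
  have hprod : 0 < ∏ p ∈ k.primeFactors, p := Finset.prod_pos fun _ => pos_of_mem_primeFactors
  refine Nat.eq_of_mul_eq_mul_right hprod ?_
  calc φ (k * d) * ∏ p ∈ k.primeFactors, p
      = k * d * ∏ p ∈ k.primeFactors, (p - 1) := by
        rw [← hkd, totient_mul_prod_primeFactors]
    _ = (k * ∏ p ∈ k.primeFactors, (p - 1)) * d := by ring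
    _ = φ k * d * ∏ p ∈ k.primeFactors, p := by
        rw [← totient_mul_prod_primeFactors]; ring

theorem Nat.totient_mul_div_totient {k n : ℕ} (hdvd : φ k ∣ n)
    (h : n.primeFactors ⊆ k.primeFactors) : φ (k * n / φ k) = n := by
  rcases eq_or_ne n 0 with rfl | hn
  · simp
  rw [Nat.mul_div_assoc _ hdvd, totient_mul_of_primeFactors_subset_s19
    ((primeFactors_mono (div_dvd_of_dvd hdvd) hn).trans h), Nat.mul_div_cancel' hdvd]

theorem Nat.eq_of_mul_eq_mul_of_coprime {a b c d : ℕ} (h : a * c = b * d)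
    (had : Coprime a d) (hbc : Coprime b c) : a = b :=
  Nat.dvd_antisymm (had.dvd_of_dvd_mul_right ⟨c, h.symm⟩) (hbc.dvd_of_dvd_mul_right ⟨d, h⟩)

theorem distinct_totient_preimages_general (n w₁ w₂ : ℕ) (hn : 0 < n)
    (hw₁ : 0 < w₁) (hw₂ : 0 < w₂) (hne : w₁ ≠ w₂)
    (hcop₁ : Nat.Coprime w₁ n) (hcop₂ : Nat.Coprime w₂ n)
    (hdvd₁ : Nat.totient (w₁ * rad n) ∣ n) (hdvd₂ : Nat.totient (w₂ * rad n) ∣ n) :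
    Nat.totient (w₁ * rad n * n / Nat.totient (w₁ * rad n)) = n ∧
    Nat.totient (w₂ * rad n * n / Nat.totient (w₂ * rad n)) = n ∧
    w₁ * rad n * n / Nat.totient (w₁ * rad n) ≠
      w₂ * rad n * n / Nat.totient (w₂ * rad n) := by
  have hrad : 0 < rad n := pos_of_dvd_of_pos (rad_dvd n) hn
  have htotient : ∀ w, 0 < w → φ (w * rad n) ∣ n → φ (w * rad n * n / φ (w * rad n)) = n :=
    fun w hw hdvd => totient_mul_div_totient hdvd <|
      (prod_primeFactors_dvd_iff (Nat.mul_pos hw hrad).ne').1 (dvd_mul_left (rad n) w)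
  have hsplit : ∀ w, φ (w * rad n) ∣ n →
      w * rad n * n / φ (w * rad n) = w * (rad n * (n / φ (w * rad n))) := fun w hdvd => by
    rw [Nat.mul_div_assoc _ hdvd, mul_assoc]
  have hcofactor : ∀ w w', Coprime w n → φ (w' * rad n) ∣ n →
      Coprime w (rad n * (n / φ (w' * rad n))) := fun w w' hcop hdvd =>
    (hcop.mul_right hcop).coprime_dvd_right (mul_dvd_mul (rad_dvd n) (div_dvd_of_dvd hdvd))
  refine ⟨htotient w₁ hw₁ hdvd₁, htotient w₂ hw₂ hdvd₂, fun h => hne ?_⟩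
  rw [hsplit w₁ hdvd₁, hsplit w₂ hdvd₂] at h
  exact eq_of_mul_eq_mul_of_coprime h (hcofactor w₁ w₂ hcop₁ hdvd₂) (hcofactor w₂ w₁ hcop₂ hdvd₁)

theorem distinct_totient_preimages (n w₁ w₂ : ℕ) (hn : 0 < n)
    (hw₁ : 0 < w₁) (hw₂ : 0 < w₂) (hne : w₁ ≠ w₂)
    (hrad : Nat.totient (rad n) ∣ n)
    (hcop₁ : Nat.Coprime w₁ n) (hcop₂ : Nat.Coprime w₂ n)
    (hdvd₁ : Nat.totient (w₁ * rad n) ∣ n) (hdvd₂ : Nat.totient (w₂ * rad n) ∣ n) :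
    Nat.totient (w₁ * rad n * n / Nat.totient (w₁ * rad n)) = n ∧
    Nat.totient (w₂ * rad n * n / Nat.totient (w₂ * rad n)) = n ∧
    w₁ * rad n * n / Nat.totient (w₁ * rad n) ≠
      w₂ * rad n * n / Nat.totient (w₂ * rad n) :=
  distinct_totient_preimages_general n w₁ w₂ hn hw₁ hw₂ hne hcop₁ hcop₂ hdvd₁ hdvd₂
end
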